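/- Let f₁, f₂ : ℂ → ℂ be smooth (infinitely differentiable as functions of two real variables) on ℂ ∖ {0}, and for such a function f write ∂f(z) := (1/2)(∂f/∂x − i·∂f/∂y)(z) for the Wirtinger derivative with respect to z. Assume that f₁(z)f₂(z) → 0 as |z| → ∞, that z ↦ f₁(z)f₂(z)/z̄ extends to a smooth function on all of ℂ, and that the functions z ↦ (∂f₁)(z)·f₂(z)/z̄ and z ↦ f₁(z)·(∂f₂)(z)/z̄ are Lebesgue-integrable on ℂ. Then ∫_ℂ (∂f₁)(z)·f₂(z)/z̄ dμ(z) = −∫_ℂ f₁(z)·(∂f₂)(z)/z̄ dμ(z), where μ is Lebesgue measure on ℂ ≅ ℝ². (This is the ∂-case of Lemma 5.10 (lem:ibp) for F = ℂ: since (∂/∂z)f(e^z x)|_{z=0} = x·∂f(x) and dx^× = ζ(1)dx/(x x̄), the stated identity is ∫_{ℂ^×}(∂/∂z)f₁(e^z x)|_{z=0} f₂(x) dx^× = −∫_{ℂ^×} f₁(x)(∂/∂z)f₂(e^z x)|_{z=0} dx^×.) -/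

import Mathlib

open MeasureTheory Filter
open Complex Set

/-- The Wirtinger derivative `∂f(z) = (1/2)(∂f/∂x − i ∂f/∂y)(z)`, where `∂f/∂x` and
`∂f/∂y` are the (real) directional derivatives of `f` at `z` in the directions `1`
and `i`. -/
noncomputable def wirtinger (f : ℂ → ℂ) (z : ℂ) : ℂ :=
  (1 / 2) * (fderiv ℝ f z 1 - Complex.I * fderiv ℝ f z Complex.I)

lemma wirtinger_mul {f g : ℂ → ℂ} {z : ℂ} (hf : DifferentiableAt ℝ f z)
    (hg : DifferentiableAt ℝ g z) :
    wirtinger (fun w => f w * g w) z = wirtinger f z * g z + f z * wirtinger g z := by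
  unfold wirtinger
  rw [fderiv_fun_mul hf hg]
  simp [ContinuousLinearMap.smul_apply, smul_eq_mul]
  ring

lemma wirtinger_invconj {z : ℂ} (hz : z ≠ 0) :
    wirtinger (fun w => ((starRingEnd ℂ) w)⁻¹) z = 0 := by
  have hconj : HasFDerivAt (⇑(starRingEnd ℂ))
      (Complex.conjCLE.toContinuousLinearMap) z := Complex.conjCLE.hasFDerivAt
  have hcz : (starRingEnd ℂ) z ≠ 0 := by simpa using hz
  have h : HasFDerivAt (fun w => ((starRingEnd ℂ) w)⁻¹)
      ((ContinuousLinearMap.smulRight (1 : ℂ →L[ℂ] ℂ) (-((starRingEnd ℂ z) ^ 2)⁻¹)).restrictScalars ℝ |>.comp Complex.conjCLE.toContinuousLinearMap) z :=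
    ((hasFDerivAt_inv hcz).restrictScalars ℝ).comp z hconj
  unfold wirtinger
  rw [h.fderiv]
  simp [ContinuousLinearMap.smul_apply, smul_eq_mul, Complex.conjCLE_apply]
  have hI : Complex.I * Complex.I = -1 := Complex.I_mul_I
  linear_combination (-((starRingEnd ℂ) z ^ 2)⁻¹) * hI

lemma preimage_symm_reProdIm (s t : Set ℝ) :
    Complex.measurableEquivRealProd.symm ⁻¹' (s ×ℂ t) = s ×ˢ t := by
  ext ⟨x, y⟩
  simp [Complex.measurableEquivRealProd_symm_apply, Complex.mem_reProdIm]

lemma setIntegral_reProdIm (φ : ℂ → ℂ) (s t : Set ℝ)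
    (hφ : IntegrableOn φ (s ×ℂ t)) :
    ∫ z in s ×ℂ t, φ z = ∫ x in s, ∫ y in t, φ (x + y * Complex.I) := by
  have h1 := (Complex.volume_preserving_equiv_real_prod.symm).setIntegral_preimage_emb
    (Complex.measurableEquivRealProd.symm.measurableEmbedding) φ (s ×ℂ t)
  rw [preimage_symm_reProdIm] at h1
  rw [← h1]
  have hint : IntegrableOn (fun p : ℝ × ℝ => φ (Complex.measurableEquivRealProd.symm p))
      (s ×ˢ t) := by
    rw [← preimage_symm_reProdIm s t]
    exact (Complex.volume_preserving_equiv_real_prod.symm).integrableOn_comp_preimage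
      (Complex.measurableEquivRealProd.symm.measurableEmbedding) |>.mpr hφ
  rw [Measure.volume_eq_prod] at hint ⊢
  rw [MeasureTheory.setIntegral_prod _ hint]
  congr 1; ext x; congr 1; ext y
  congr 1
  simp [Complex.measurableEquivRealProd_symm_apply, Complex.mk_eq_add_mul_I]

lemma continuous_wirtinger (h : ℂ → ℂ) (hsm : ContDiff ℝ (⊤ : ℕ∞) h) :
    Continuous (fun z => wirtinger h z) := by
  have h1 : Continuous (fderiv ℝ h) := hsm.continuous_fderiv (by simp)
  unfold wirtinger
  fun_prop

lemma key_ptwise (h : ℂ → ℂ) (ζ : ℂ) :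
    Complex.I • ((Complex.conjCLE.toContinuousLinearMap.comp (fderiv ℝ h ζ)) 1)
      - (Complex.conjCLE.toContinuousLinearMap.comp (fderiv ℝ h ζ)) Complex.I
      = 2 * Complex.I * (starRingEnd ℂ) (wirtinger h ζ) := by
  simp only [ContinuousLinearMap.comp_apply, ContinuousLinearEquiv.coe_coe, smul_eq_mul,
    Complex.conjCLE_apply, wirtinger, map_mul, map_sub, map_div₀, map_one, map_ofNat,
    Complex.conj_I]
  linear_combination (-(starRingEnd ℂ) ((fderiv ℝ h ζ) Complex.I)) * Complex.I_mul_I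

lemma integral_wirtinger_eq_zero (h : ℂ → ℂ) (hsm : ContDiff ℝ (⊤ : ℕ∞) h)
    (hint : Integrable (fun z => wirtinger h z))
    (hdecay : Tendsto (fun z : ℂ => ‖z‖ * ‖h z‖) (cocompact ℂ) (nhds 0)) :
    ∫ z : ℂ, wirtinger h z = 0 := by
  have hwc : Continuous (fun z => wirtinger h z) := continuous_wirtinger h hsm
  set φ : ℂ → ℂ := fun z => 2 * Complex.I * (starRingEnd ℂ) (wirtinger h z) with hφdef
  have hφc : Continuous φ := continuous_const.mul (Complex.continuous_conj.comp hwc)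
  set S : ℕ → Set ℂ :=
    fun n => Icc (-((n : ℝ) + 1)) ((n : ℝ) + 1) ×ℂ Icc (-((n : ℝ) + 1)) ((n : ℝ) + 1) with hSdef
  have hScompact : ∀ n, IsCompact (S n) := fun n =>
    Metric.isCompact_of_isClosed_isBounded (isClosed_Icc.reProdIm isClosed_Icc)
      ((Metric.isBounded_Icc _ _).reProdIm (Metric.isBounded_Icc _ _))
  have hSm : ∀ n, MeasurableSet (S n) := fun n => (hScompact n).measurableSet
  have hmono : Monotone S := by
    intro m n hmn z hz
    rw [hSdef, Complex.mem_reProdIm] at *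
    have hle : ((m : ℝ) + 1) ≤ (n : ℝ) + 1 := by
      have : (m : ℝ) ≤ n := Nat.cast_le.2 hmn
      linarith
    exact ⟨Icc_subset_Icc (by linarith) hle hz.1, Icc_subset_Icc (by linarith) hle hz.2⟩
  have hU : ⋃ n, S n = univ := by
    ext z
    simp only [mem_iUnion, mem_univ, iff_true]
    obtain ⟨n, hn⟩ := exists_nat_gt (max |z.re| |z.im|)
    refine ⟨n, ?_⟩
    rw [hSdef, Complex.mem_reProdIm]
    have h1 : |z.re| ≤ (n : ℝ) + 1 := by
      have := le_max_left |z.re| |z.im|; linarith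
    have h2 : |z.im| ≤ (n : ℝ) + 1 := by
      have := le_max_right |z.re| |z.im|; linarith
    rw [abs_le] at h1 h2
    exact ⟨⟨by linarith [h1.1], h1.2⟩, ⟨by linarith [h2.1], h2.2⟩⟩
  have hTend := MeasureTheory.tendsto_setIntegral_of_monotone hSm hmono
    (by rw [hU]; exact hint.integrableOn)
  rw [hU, MeasureTheory.setIntegral_univ] at hTend
  refine tendsto_nhds_unique hTend ?_
  rw [NormedAddCommGroup.tendsto_nhds_zero]
  intro ε hε
  have hε9 : (0 : ℝ) < ε / 9 := by positivity
  have hev : ∀ᶠ z : ℂ in cocompact ℂ, ‖z‖ * ‖h z‖ < ε / 9 :=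
    hdecay.eventually (gt_mem_nhds hε9)
  obtain ⟨K, hK, hKP⟩ := hasBasis_cocompact.eventually_iff.1 hev
  obtain ⟨r, hr⟩ := hK.isBounded.subset_closedBall 0
  filter_upwards [eventually_ge_atTop ⌈max r 0⌉₊] with n hn
  set R : ℝ := (n : ℝ) + 1 with hRdef
  have hrR : max r 0 < R := by
    have h1 : (⌈max r 0⌉₊ : ℝ) ≤ (n : ℝ) := Nat.cast_le.2 hn
    have h2 : max r 0 ≤ (⌈max r 0⌉₊ : ℝ) := Nat.le_ceil _
    linarith
  have hRpos : (0 : ℝ) < R := lt_of_le_of_lt (le_max_right r 0) hrR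
  have hRR : -R ≤ R := by linarith
  -- norm bound on the boundary
  have hedge : ∀ z : ℂ, R ≤ ‖z‖ → ‖(starRingEnd ℂ) (h z)‖ ≤ ε / 9 / R := by
    intro z hz
    have hzK : z ∈ Kᶜ := by
      intro hzK
      have := hr hzK
      rw [Metric.mem_closedBall, dist_zero_right] at this
      have : r < r := lt_of_lt_of_le (lt_of_le_of_lt (le_max_left r 0) (lt_of_lt_of_le hrR hz)) this
      exact absurd this (lt_irrefl r)
    have hlt := hKP hzK
    rw [RCLike.norm_conj, le_div_iff₀ hRpos]
    calc ‖h z‖ * R ≤ ‖h z‖ * ‖z‖ := by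
          exact mul_le_mul_of_nonneg_left hz (norm_nonneg _)
      _ = ‖z‖ * ‖h z‖ := mul_comm _ _
      _ ≤ ε / 9 := le_of_lt hlt
  -- rectangle theorem
  set z₀ : ℂ := ⟨-R, -R⟩ with hz₀
  set w₀ : ℂ := ⟨R, R⟩ with hw₀
  have hz₀re : z₀.re = -R := rfl
  have hz₀im : z₀.im = -R := rfl
  have hw₀re : w₀.re = R := rfl
  have hw₀im : w₀.im = R := rfl
  have hrectSet : (Set.uIcc z₀.re w₀.re ×ℂ Set.uIcc z₀.im w₀.im) = S n := by
    rw [hz₀re, hz₀im, hw₀re, hw₀im, uIcc_of_le hRR, hSdef]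
  have hg' : ∀ ζ : ℂ, HasFDerivAt (fun w => (starRingEnd ℂ) (h w))
      (Complex.conjCLE.toContinuousLinearMap.comp (fderiv ℝ h ζ)) ζ := fun ζ =>
    (Complex.conjCLE.toContinuousLinearMap.hasFDerivAt).comp ζ
      (hsm.differentiable (by simp) ζ).hasFDerivAt
  have hφint : IntegrableOn φ (S n) := hφc.continuousOn.integrableOn_compact (hScompact n)
  have hrect := Complex.integral_boundary_rect_of_continuousOn_of_hasFDerivAt_real
    (fun w => (starRingEnd ℂ) (h w))
    (fun ζ => Complex.conjCLE.toContinuousLinearMap.comp (fderiv ℝ h ζ)) z₀ w₀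
    ((Complex.continuous_conj.comp hsm.continuous).continuousOn)
    (fun x _ => hg' x)
    (by simp only [key_ptwise h]; rw [hrectSet]; exact hφint)
  simp only [key_ptwise h] at hrect
  -- rewrite RHS of hrect to the set integral over S n
  have hSint : ∫ z in S n, φ z
      = ∫ x in Icc (-R) R, ∫ y in Icc (-R) R, φ (x + y * Complex.I) := by
    rw [hSdef]
    exact setIntegral_reProdIm φ _ _ hφint
  have hinner : ∀ x : ℝ, (∫ y in (-R)..R, φ (x + y * Complex.I))
      = ∫ y in Icc (-R) R, φ (x + y * Complex.I) := fun x => by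
    rw [intervalIntegral.integral_of_le hRR, MeasureTheory.integral_Icc_eq_integral_Ioc]
  have hiter : (∫ x in (-R)..R, ∫ y in (-R)..R, φ (x + y * Complex.I))
      = ∫ x in Icc (-R) R, ∫ y in Icc (-R) R, φ (x + y * Complex.I) := by
    simp_rw [hinner]
    rw [intervalIntegral.integral_of_le hRR, MeasureTheory.integral_Icc_eq_integral_Ioc]
  have hrect2 : (∫ x in (-R)..R, (starRingEnd ℂ) (h (x + ((-R : ℝ) : ℂ) * Complex.I)))
      - (∫ x in (-R)..R, (starRingEnd ℂ) (h (x + ((R : ℝ) : ℂ) * Complex.I)))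
      + Complex.I • (∫ y in (-R)..R, (starRingEnd ℂ) (h (((R : ℝ) : ℂ) + y * Complex.I)))
      - Complex.I • (∫ y in (-R)..R, (starRingEnd ℂ) (h (((-R : ℝ) : ℂ) + y * Complex.I)))
      = ∫ z in S n, φ z := by
    rw [hSint, ← hiter]
    simpa [hz₀re, hz₀im, hw₀re, hw₀im, hφdef] using hrect
  -- bound the four edges
  have edgebound : ∀ F : ℝ → ℂ, (∀ x ∈ Set.uIoc (-R) R, ‖F x‖ ≤ ε / 9 / R) →
      ‖∫ x in (-R)..R, F x‖ ≤ 2 * (ε / 9) := by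
    intro F hF
    have hb := intervalIntegral.norm_integral_le_of_norm_le_const hF
    have habs : |R - (-R)| = 2 * R := by rw [abs_of_pos (by linarith)]; ring
    rw [habs] at hb
    calc ‖∫ x in (-R)..R, F x‖ ≤ ε / 9 / R * (2 * R) := hb
      _ = 2 * (ε / 9) := by field_simp
  have hb1 : ‖∫ x in (-R)..R, (starRingEnd ℂ) (h (x + ((-R : ℝ) : ℂ) * Complex.I))‖
      ≤ 2 * (ε / 9) := by
    refine edgebound _ fun x _ => hedge _ ?_
    have h1 : |(-R : ℝ)| ≤ ‖(x : ℂ) + ((-R : ℝ) : ℂ) * Complex.I‖ := by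
      simpa using Complex.abs_im_le_norm ((x : ℂ) + ((-R : ℝ) : ℂ) * Complex.I)
    rw [abs_of_nonpos (by linarith)] at h1
    linarith
  have hb2 : ‖∫ x in (-R)..R, (starRingEnd ℂ) (h (x + ((R : ℝ) : ℂ) * Complex.I))‖
      ≤ 2 * (ε / 9) := by
    refine edgebound _ fun x _ => hedge _ ?_
    have h1 : |(R : ℝ)| ≤ ‖(x : ℂ) + ((R : ℝ) : ℂ) * Complex.I‖ := by
      simpa using Complex.abs_im_le_norm ((x : ℂ) + ((R : ℝ) : ℂ) * Complex.I)
    rw [abs_of_pos hRpos] at h1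
    linarith
  have hb3 : ‖∫ y in (-R)..R, (starRingEnd ℂ) (h (((R : ℝ) : ℂ) + y * Complex.I))‖
      ≤ 2 * (ε / 9) := by
    refine edgebound _ fun y _ => hedge _ ?_
    have h1 : |(R : ℝ)| ≤ ‖((R : ℝ) : ℂ) + (y : ℂ) * Complex.I‖ := by
      simpa using Complex.abs_re_le_norm (((R : ℝ) : ℂ) + (y : ℂ) * Complex.I)
    rw [abs_of_pos hRpos] at h1
    linarith
  have hb4 : ‖∫ y in (-R)..R, (starRingEnd ℂ) (h (((-R : ℝ) : ℂ) + y * Complex.I))‖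
      ≤ 2 * (ε / 9) := by
    refine edgebound _ fun y _ => hedge _ ?_
    have h1 : |(-R : ℝ)| ≤ ‖((-R : ℝ) : ℂ) + (y : ℂ) * Complex.I‖ := by
      simpa using Complex.abs_re_le_norm (((-R : ℝ) : ℂ) + (y : ℂ) * Complex.I)
    rw [abs_of_nonpos (by linarith)] at h1
    linarith
  set A1 := ∫ x in (-R)..R, (starRingEnd ℂ) (h (x + ((-R : ℝ) : ℂ) * Complex.I)) with hA1
  set A2 := ∫ x in (-R)..R, (starRingEnd ℂ) (h (x + ((R : ℝ) : ℂ) * Complex.I)) with hA2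
  set A3 := ∫ y in (-R)..R, (starRingEnd ℂ) (h (((R : ℝ) : ℂ) + y * Complex.I)) with hA3
  set A4 := ∫ y in (-R)..R, (starRingEnd ℂ) (h (((-R : ℝ) : ℂ) + y * Complex.I)) with hA4
  have hsmul : ∀ w : ℂ, ‖Complex.I • w‖ = ‖w‖ := fun w => by
    rw [smul_eq_mul, norm_mul, Complex.norm_I, one_mul]
  have hBnorm : ‖∫ z in S n, φ z‖ ≤ 8 * (ε / 9) := by
    rw [← hrect2]
    calc ‖A1 - A2 + Complex.I • A3 - Complex.I • A4‖
        ≤ ‖A1 - A2 + Complex.I • A3‖ + ‖Complex.I • A4‖ := norm_sub_le _ _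
      _ ≤ (‖A1 - A2‖ + ‖Complex.I • A3‖) + ‖Complex.I • A4‖ := by
          gcongr; exact norm_add_le _ _
      _ ≤ ((‖A1‖ + ‖A2‖) + ‖Complex.I • A3‖) + ‖Complex.I • A4‖ := by
          gcongr; exact norm_sub_le _ _
      _ ≤ 8 * (ε / 9) := by rw [hsmul A3, hsmul A4]; linarith
  have hφeq : ∫ z in S n, φ z
      = 2 * Complex.I * (starRingEnd ℂ) (∫ z in S n, wirtinger h z) := by
    simp only [hφdef]
    rw [MeasureTheory.integral_const_mul, integral_conj]
  have hnormeq : ‖∫ z in S n, φ z‖ = 2 * ‖∫ z in S n, wirtinger h z‖ := by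
    rw [hφeq, norm_mul, norm_mul, Complex.norm_I, RCLike.norm_conj]
    norm_num
  rw [hnormeq] at hBnorm
  linarith

/-- Integration by parts on `ℂ^×` (Lemma 5.10, complex case, `∂`-version): if
`f₁, f₂ : ℂ → ℂ` are smooth away from `0`, `f₁ f₂ → 0` as `|z| → ∞`, `f₁(z)f₂(z)/z̄`
extends smoothly over `0`, and both `∂f₁(z) f₂(z)/z̄` and `f₁(z) ∂f₂(z)/z̄` are Lebesgue
integrable on `ℂ`, then `∫ ∂f₁(z) f₂(z)/z̄ = −∫ f₁(z) ∂f₂(z)/z̄`. -/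
theorem mult_integration_by_parts_complex (f₁ f₂ : ℂ → ℂ)
    (h₁ : ContDiffOn ℝ (⊤ : ℕ∞) f₁ {(0 : ℂ)}ᶜ) (h₂ : ContDiffOn ℝ (⊤ : ℕ∞) f₂ {(0 : ℂ)}ᶜ)
    (hinfty : Tendsto (fun z => f₁ z * f₂ z) (cocompact ℂ) (nhds 0))
    (hext : ∃ h : ℂ → ℂ, ContDiff ℝ (⊤ : ℕ∞) h ∧
      ∀ z : ℂ, z ≠ 0 → h z = f₁ z * f₂ z / (starRingEnd ℂ z))
    (hi₁ : Integrable (fun z : ℂ => wirtinger f₁ z * f₂ z / (starRingEnd ℂ z)))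
    (hi₂ : Integrable (fun z : ℂ => f₁ z * wirtinger f₂ z / (starRingEnd ℂ z))) :
    ∫ z : ℂ, wirtinger f₁ z * f₂ z / (starRingEnd ℂ z) =
      - ∫ z : ℂ, f₁ z * wirtinger f₂ z / (starRingEnd ℂ z) := by
  obtain ⟨H, hHsm, hHeq⟩ := hext
  set G : ℂ → ℂ := fun z => wirtinger f₁ z * f₂ z / (starRingEnd ℂ z)
    + f₁ z * wirtinger f₂ z / (starRingEnd ℂ z) with hGdef
  -- pointwise identity away from 0
  have claim1 : ∀ z : ℂ, z ≠ 0 → wirtinger H z = G z := by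
    intro z hz
    have hopen : {(0 : ℂ)}ᶜ ∈ nhds z := (isOpen_compl_singleton).mem_nhds hz
    have hdf₁ : DifferentiableAt ℝ f₁ z :=
      (h₁.contDiffAt hopen).differentiableAt (by simp)
    have hdf₂ : DifferentiableAt ℝ f₂ z :=
      (h₂.contDiffAt hopen).differentiableAt (by simp)
    have hdinv : DifferentiableAt ℝ (fun w => ((starRingEnd ℂ) w)⁻¹) z := by
      have hcz : (starRingEnd ℂ) z ≠ 0 := by simpa using hz
      exact (((hasFDerivAt_inv hcz).restrictScalars ℝ).comp z
        (Complex.conjCLE.hasFDerivAt :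
          HasFDerivAt (⇑(starRingEnd ℂ)) Complex.conjCLE.toContinuousLinearMap z)).differentiableAt
    have hEV : H =ᶠ[nhds z] fun w => (f₁ w * f₂ w) * ((starRingEnd ℂ) w)⁻¹ := by
      filter_upwards [hopen] with w hw
      rw [hHeq w hw, div_eq_mul_inv]
    have hw1 : wirtinger H z
        = wirtinger (fun w => (f₁ w * f₂ w) * ((starRingEnd ℂ) w)⁻¹) z := by
      unfold wirtinger
      rw [hEV.fderiv_eq]
    rw [hw1, wirtinger_mul (hdf₁.fun_mul hdf₂) hdinv, wirtinger_mul hdf₁ hdf₂,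
      wirtinger_invconj hz, hGdef]
    simp only [div_eq_mul_inv]
    ring
  have h0 : ∀ᵐ z : ℂ, z ≠ 0 := by
    rw [MeasureTheory.ae_iff]
    simp only [ne_eq, not_not]
    have : {z : ℂ | z = 0} = {0} := by ext w; simp
    rw [this]
    exact MeasureTheory.measure_singleton 0
  have hae : (fun z => wirtinger H z) =ᵐ[volume] G :=
    h0.mono fun z hz => claim1 z hz
  have hGint : Integrable G := hi₁.add hi₂
  have hHint : Integrable (fun z => wirtinger H z) := hGint.congr hae.symm
  -- decay
  have hne : ∀ᶠ z : ℂ in cocompact ℂ, z ≠ 0 :=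
    hasBasis_cocompact.eventually_iff.2 ⟨{0}, isCompact_singleton, fun z hz => hz⟩
  have hdecay : Tendsto (fun z : ℂ => ‖z‖ * ‖H z‖) (cocompact ℂ) (nhds 0) := by
    have h1 : Tendsto (fun z : ℂ => ‖f₁ z * f₂ z‖) (cocompact ℂ) (nhds 0) := by
      simpa using hinfty.norm
    refine h1.congr' ?_
    filter_upwards [hne] with z hz
    rw [hHeq z hz, norm_div, RCLike.norm_conj]
    have hzn : ‖z‖ ≠ 0 := by
      simpa using norm_ne_zero_iff.2 hz
    field_simp
  have hzero : ∫ z : ℂ, wirtinger H z = 0 :=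
    integral_wirtinger_eq_zero H hHsm hHint hdecay
  have hGzero : ∫ z : ℂ, G z = 0 := by
    rw [← MeasureTheory.integral_congr_ae hae]
    exact hzero
  rw [hGdef] at hGzero
  rw [MeasureTheory.integral_add hi₁ hi₂] at hGzero
  exact eq_neg_of_add_eq_zero_left hGzero
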